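/- arXiv:1406.3757 — 2 statements merged into one kernel-verified Lean document; each statement's English description precedes it below -/
import Mathlib

section
/- Let m, n ≥ 1, p an odd prime, r ≥ 1, and s, t ∈ Z. Let ρ₀ be the half-sum of positive even roots of GL(m|n), ρ₁ the half-sum of positive odd roots, ρ = ρ₀ − ρ₁, and ρ_{s,t} = s(ε₁+⋯+ε_m) + t(ε_{m+1}+⋯+ε_{m+n}). Then p does not divide ((p^r−1)ρ₀ + ρ_{s,t} + ρ, ε_i − ε_j) for all pairs 1 ≤ i ≤ m < j ≤ m+n if and only if p does not divide ((p^r+1)/2)·m + ((p^r−1)/2)·n + s + t. -/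
open Finset

/-- The standard basis weight `ε i` of `GL(m|n)`, with rational coefficients. -/
noncomputable def stmt9.eps {N : ℕ} (i : Fin N) : Fin N → ℚ := Pi.single i 1

/-- The supersymmetric bilinear form on weights: `(ε i, ε j) = δ_ij` for `i, j < m`
and `(ε i, ε j) = -δ_ij` for `i, j ≥ m`. -/
noncomputable def stmt9.form (m : ℕ) {N : ℕ} (x y : Fin N → ℚ) : ℚ :=
  ∑ i : Fin N, if (i : ℕ) < m then x i * y i else - (x i * y i)

/-- Half-sum of the positive even roots of `GL(m|n)`. -/
noncomputable def stmt9.rho0 (m n : ℕ) : Fin (m + n) → ℚ :=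
  (1 / 2 : ℚ) • ∑ q ∈ Finset.univ.filter
      (fun q : Fin (m + n) × Fin (m + n) => q.1 < q.2 ∧
        (((q.1 : ℕ) < m ∧ (q.2 : ℕ) < m) ∨ (m ≤ (q.1 : ℕ) ∧ m ≤ (q.2 : ℕ)))),
    (stmt9.eps q.1 - stmt9.eps q.2)

/-- Half-sum of the positive odd roots of `GL(m|n)`. -/
noncomputable def stmt9.rho1 (m n : ℕ) : Fin (m + n) → ℚ :=
  (1 / 2 : ℚ) • ∑ q ∈ Finset.univ.filter
      (fun q : Fin (m + n) × Fin (m + n) => (q.1 : ℕ) < m ∧ m ≤ (q.2 : ℕ)),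
    (stmt9.eps q.1 - stmt9.eps q.2)

/-- The weight `ρ_{s,t} = s(ε₁+⋯+ε_m) + t(ε_{m+1}+⋯+ε_{m+n})`. -/
noncomputable def stmt9.rhost (m n : ℕ) (s t : ℤ) : Fin (m + n) → ℚ :=
  (s : ℚ) • ∑ i ∈ Finset.univ.filter (fun i : Fin (m + n) => (i : ℕ) < m), stmt9.eps i +
  (t : ℚ) • ∑ i ∈ Finset.univ.filter (fun i : Fin (m + n) => m ≤ (i : ℕ)), stmt9.eps i

/-- `p` divides a rational number `x` iff `x = p·z` for some integer `z`. -/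
def stmt9.pdvd (p : ℕ) (x : ℚ) : Prop := ∃ z : ℤ, x = (p : ℚ) * z

/-!
For `i < m ≤ j` the pairing with `ε i - ε j` is the sum of the `i`-th and `j`-th coordinates,
and all coordinates of `ρ₀`, `ρ₁`, `ρ_{s,t}` are explicit. Writing `p ^ r = 2c + 1`, the pairing
comes out as `(c + 1) m + c n + s + t - p ^ r (1 + i + j - m)` (indices from `0`), which is
congruent modulo `p` to the right-hand side because `r ≥ 1`. Since such a pair `i, j` exists,
the two conditions agree.
-/

namespace stmt9

lemma eps_apply {N : ℕ} (a k : Fin N) : eps a k = if k = a then 1 else 0 := by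
  simp [eps, Pi.single_apply]

lemma card_filter_fin_of_iff {N a b : ℕ} (hb : b ≤ N) (P : Fin N → Prop) [DecidablePred P]
    (hP : ∀ x : Fin N, P x ↔ a ≤ (x : ℕ) ∧ (x : ℕ) < b) : #{x | P x} = b - a := by
  rw [← Nat.card_Ico, ← card_map Fin.valEmbedding]
  congr 1
  ext v
  simp only [mem_map, mem_filter, mem_univ, true_and, hP, Fin.valEmbedding_apply, mem_Ico]
  exact ⟨by rintro ⟨x, hx, rfl⟩; exact hx, fun h => ⟨⟨v, by omega⟩, h, rfl⟩⟩

lemma sum_eps_sub_eps_apply {N : ℕ} (P : Fin N → Fin N → Prop) [∀ a b, Decidable (P a b)]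
    (k : Fin N) :
    (∑ q ∈ univ.filter (fun q : Fin N × Fin N => P q.1 q.2), (eps q.1 - eps q.2)) k
      = (#{b | P k b} : ℚ) - #{a | P a k} := by
  simp only [Finset.sum_apply, Pi.sub_apply, sum_sub_distrib, eps_apply, sum_boole,
    filter_filter]
  congr 2
  · refine card_nbij' Prod.snd (fun b => (k, b)) ?_ ?_ ?_ ?_ <;>
      simp +contextual [Set.MapsTo, Set.LeftInvOn, Set.RightInvOn]
  · refine card_nbij' Prod.fst (fun a => (a, k)) ?_ ?_ ?_ ?_ <;>
      simp +contextual [Set.MapsTo, Set.LeftInvOn, Set.RightInvOn]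

section coordinates

variable {m n : ℕ} {k : Fin (m + n)}

lemma rho0_apply_of_lt (hk : (k : ℕ) < m) : rho0 m n k = ((m : ℚ) - 1 - 2 * k) / 2 := by
  rw [rho0, Pi.smul_apply, sum_eps_sub_eps_apply (fun a b => a < b ∧
      ((a < m ∧ b < m) ∨ (m ≤ (a : ℕ) ∧ m ≤ (b : ℕ)))) k,
    card_filter_fin_of_iff (a := k + 1) (b := m) (by omega) _
      (fun b => by simp only [Fin.lt_def]; omega),
    card_filter_fin_of_iff (a := 0) (b := k) (by omega) _
      (fun b => by simp only [Fin.lt_def]; omega),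
    Nat.cast_sub (by omega), Nat.sub_zero]
  push_cast
  ring

lemma rho0_apply_of_le (hk : m ≤ (k : ℕ)) :
    rho0 m n k = (2 * (m : ℚ) + n - 1 - 2 * k) / 2 := by
  rw [rho0, Pi.smul_apply, sum_eps_sub_eps_apply (fun a b => a < b ∧
      ((a < m ∧ b < m) ∨ (m ≤ (a : ℕ) ∧ m ≤ (b : ℕ)))) k,
    card_filter_fin_of_iff (a := k + 1) (b := m + n) le_rfl _
      (fun b => by simp only [Fin.lt_def]; omega),
    card_filter_fin_of_iff (a := m) (b := k) (by omega) _
      (fun b => by simp only [Fin.lt_def]; omega),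
    Nat.cast_sub (by omega), Nat.cast_sub hk]
  push_cast
  ring

lemma rho1_apply_of_lt (hk : (k : ℕ) < m) : rho1 m n k = (n : ℚ) / 2 := by
  rw [rho1, Pi.smul_apply, sum_eps_sub_eps_apply (fun a b => (a : ℕ) < m ∧ m ≤ (b : ℕ)) k,
    card_filter_fin_of_iff (a := m) (b := m + n) le_rfl _ (fun b => by omega),
    card_filter_fin_of_iff (a := 0) (b := 0) (by omega) _ (fun b => by omega),
    Nat.add_sub_cancel_left]
  push_cast
  ring

lemma rho1_apply_of_le (hk : m ≤ (k : ℕ)) : rho1 m n k = -(m : ℚ) / 2 := by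
  rw [rho1, Pi.smul_apply, sum_eps_sub_eps_apply (fun a b => (a : ℕ) < m ∧ m ≤ (b : ℕ)) k,
    card_filter_fin_of_iff (a := 0) (b := 0) (by omega) _ (fun b => by omega),
    card_filter_fin_of_iff (a := 0) (b := m) (by omega) _ (fun b => by omega),
    Nat.sub_self, Nat.sub_zero]
  push_cast
  ring

lemma rhost_apply (s t : ℤ) : rhost m n s t k = if (k : ℕ) < m then (s : ℚ) else t := by
  by_cases hk : (k : ℕ) < m <;> simp [rhost, Finset.sum_apply, eps_apply, hk]

end coordinates

lemma form_eps_sub_eps {m N : ℕ} (x : Fin N → ℚ) {i j : Fin N} (hi : (i : ℕ) < m)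
    (hj : m ≤ (j : ℕ)) : form m x (eps i - eps j) = x i + x j := by
  have hij : i ≠ j := by rintro rfl; omega
  simp only [form, Pi.sub_apply, eps_apply, mul_sub, mul_ite, mul_one, mul_zero, neg_sub]
  rw [Fintype.sum_eq_add i j hij]
  · simp [hi, hij, hij.symm, not_lt.2 hj]
  · intro k hk; simp [hk.1, hk.2]

lemma form_weight_eps_sub_eps {m n : ℕ} (s t : ℤ) {q : ℤ} (hq : Odd q) {i j : Fin (m + n)}
    (hi : (i : ℕ) < m) (hj : m ≤ (j : ℕ)) :
    form m (((q : ℚ) - 1) • rho0 m n + rhost m n s t + (rho0 m n - rho1 m n)) (eps i - eps j)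
      = (((q + 1) / 2 * m + (q - 1) / 2 * n + s + t - q * (1 + i + j - m) : ℤ) : ℚ) := by
  obtain ⟨c, rfl⟩ := hq
  rw [show (2 * c + 1 + 1) / 2 = c + 1 by omega, show (2 * c + 1 - 1) / 2 = c by omega,
    form_eps_sub_eps _ hi hj]
  simp only [Pi.add_apply, Pi.sub_apply, Pi.smul_apply, smul_eq_mul, rho0_apply_of_lt hi,
    rho0_apply_of_le hj, rho1_apply_of_lt hi, rho1_apply_of_le hj, rhost_apply, if_pos hi,
    if_neg (not_lt.2 hj)]
  push_cast
  ring

lemma pdvd_intCast_iff (p : ℕ) (z : ℤ) : pdvd p z ↔ (p : ℤ) ∣ z :=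
  ⟨fun ⟨w, hw⟩ => ⟨w, by exact_mod_cast hw⟩,
    fun ⟨w, hw⟩ => ⟨w, by rw [hw]; push_cast; rfl⟩⟩

end stmt9

theorem stmt_9_general (m n r : ℕ) (hm : 1 ≤ m) (hn : 1 ≤ n) (hr : 1 ≤ r)
    (p : ℕ) (hodd : Odd p) (s t : ℤ) :
    (∀ i j : Fin (m + n), (i : ℕ) < m → m ≤ (j : ℕ) →
      ¬ stmt9.pdvd p (stmt9.form m
          (((p : ℚ) ^ r - 1) • stmt9.rho0 m n + stmt9.rhost m n s t +
            (stmt9.rho0 m n - stmt9.rho1 m n))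
          (stmt9.eps i - stmt9.eps j))) ↔
    ¬ ((p : ℤ) ∣ (((p : ℤ) ^ r + 1) / 2 * m + ((p : ℤ) ^ r - 1) / 2 * n + s + t)) := by
  have hpr : (p : ℚ) ^ r = (((p : ℤ) ^ r : ℤ) : ℚ) := by push_cast; rfl
  have key : ∀ i j : Fin (m + n), (i : ℕ) < m → m ≤ (j : ℕ) →
      (stmt9.pdvd p (stmt9.form m (((p : ℚ) ^ r - 1) • stmt9.rho0 m n + stmt9.rhost m n s t +
          (stmt9.rho0 m n - stmt9.rho1 m n)) (stmt9.eps i - stmt9.eps j)) ↔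
        (p : ℤ) ∣ (((p : ℤ) ^ r + 1) / 2 * m + ((p : ℤ) ^ r - 1) / 2 * n + s + t)) := by
    intro i j hi hj
    rw [hpr, stmt9.form_weight_eps_sub_eps s t (Int.odd_coe_nat p |>.2 hodd).pow hi hj,
      stmt9.pdvd_intCast_iff, dvd_sub_left ((dvd_pow_self _ (by omega)).mul_right _)]
  refine ⟨fun h hN => ?_, fun hN i j hi hj hdvd => hN ((key i j hi hj).1 hdvd)⟩
  obtain ⟨i, j, hi, hj⟩ : ∃ i j : Fin (m + n), (i : ℕ) < m ∧ m ≤ (j : ℕ) :=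
    ⟨⟨0, by omega⟩, ⟨m, by omega⟩, hm, le_rfl⟩
  exact h i j hi hj ((key i j hi hj).2 hN)

/-- with `ρ = ρ₀ - ρ₁`, the weight `(p^r−1)ρ₀ + ρ_{s,t}` satisfies
`p ∤ ((p^r−1)ρ₀ + ρ_{s,t} + ρ, ε_i − ε_j)` for all `1 ≤ i ≤ m < j ≤ m+n` if and only if
`p ∤ ((p^r+1)/2)·m + ((p^r−1)/2)·n + s + t`. -/
theorem stmt_9 (m n r : ℕ) (hm : 1 ≤ m) (hn : 1 ≤ n) (hr : 1 ≤ r)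
    (p : ℕ) (hp : p.Prime) (hodd : Odd p) (s t : ℤ) :
    (∀ i j : Fin (m + n), (i : ℕ) < m → m ≤ (j : ℕ) →
      ¬ stmt9.pdvd p (stmt9.form m
          (((p : ℚ) ^ r - 1) • stmt9.rho0 m n + stmt9.rhost m n s t +
            (stmt9.rho0 m n - stmt9.rho1 m n))
          (stmt9.eps i - stmt9.eps j))) ↔
    ¬ ((p : ℤ) ∣ (((p : ℤ) ^ r + 1) / 2 * m + ((p : ℤ) ^ r - 1) / 2 * n + s + t)) :=
  stmt_9_general m n r hm hn hr p hodd s t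
end

section
/- Let K be a field of characteristic p, W a K-vector space with basis w₁,…,w_{m+n} (m,n ≥ 1), and consider the operators e_{ij} (1 ≤ i ≤ m < j ≤ m+n) acting on the space V_k with basis {w₊^I w₋^β : I ⊆ {1,…,m}, β ∈ Z_{≥0}^n, |I| + |β| = k} by e_{ij}·(w₊^I w₋^β) = β_{j−m} · w₊^{I∪{i}} w₋^{β − e_{j−m}} if i ∉ I, and 0 if i ∈ I (where w₊^{I∪{i}} carries the appropriate sign and the result is 0 when β_{j−m}=0). Then the common kernel of all e_{ij} is spanned by: all w₊^I w₋^β with |I| < m and every β_t divisible by p, together with all w₊^{{1,…,m}} w₋^β (only when k ≥ m). -/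
open Finset

/-- Index set for the monomial basis `w₊^I w₋^β` of `Λ^k(W)` for `GL(m|n)`:
pairs `(I, β)` with `I ⊆ {1,…,m}`, `β ∈ ℤ_{≥0}^n` and `|I| + |β| = k`. -/
def stmt11.Idx (m n k : ℕ) : Type :=
  {x : Finset (Fin m) × (Fin n → ℕ) // x.1.card + ∑ t, x.2 t = k}

/-- The space `V_k` (the `k`-th super exterior power of `W` in its monomial basis). -/
def stmt11.V (K : Type*) [Field K] (m n k : ℕ) : Type _ := stmt11.Idx m n k →₀ K

noncomputable instance (K : Type*) [Field K] (m n k : ℕ) :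
    AddCommGroup (stmt11.V K m n k) := Finsupp.instAddCommGroup

noncomputable instance (K : Type*) [Field K] (m n k : ℕ) :
    Module K (stmt11.V K m n k) := Finsupp.module _ _

/-- The image of the basis vector `w₊^I w₋^β` under the operator
`e_{ij} = (multiplication by w_i) ∘ ∂/∂x_j` (with the Koszul sign). -/
noncomputable def stmt11.target (K : Type*) [Field K] {m n k : ℕ}
    (i : Fin m) (j : Fin n) (x : stmt11.Idx m n k) : stmt11.V K m n k :=
  if h : i ∉ x.1.1 ∧ x.1.2 j ≠ 0 then
    (((-1 : K) ^ (x.1.1.filter (fun a => a < i)).card) * (x.1.2 j : K)) •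
      Finsupp.single
        ⟨(insert i x.1.1, Function.update x.1.2 j (x.1.2 j - 1)), by
          have h1 : (insert i x.1.1).card = x.1.1.card + 1 :=
            Finset.card_insert_of_notMem h.1
          have h2 : ∑ t, Function.update x.1.2 j (x.1.2 j - 1) t =
              (x.1.2 j - 1) + ∑ t ∈ Finset.univ.erase j, x.1.2 t := by
            rw [← Finset.add_sum_erase _ _ (Finset.mem_univ j)]
            simp [Function.update_apply, Finset.sum_congr rfl]
            exact Finset.sum_congr rfl fun t ht => by
              simp [Function.update_apply, (Finset.mem_erase.mp ht).1]
          have h3 : x.1.2 j + ∑ t ∈ Finset.univ.erase j, x.1.2 t = ∑ t, x.1.2 t :=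
            Finset.add_sum_erase _ _ (Finset.mem_univ j)
          have hx := x.2
          have hj := h.2
          simp only [h1, h2]
          omega⟩ 1
  else 0

/-- The operator `e_{ij}` on `V_k`. -/
noncomputable def stmt11.e (K : Type*) [Field K] {m n k : ℕ} (i : Fin m) (j : Fin n) :
    stmt11.V K m n k →ₗ[K] stmt11.V K m n k :=
  Finsupp.lsum K fun x => LinearMap.toSpanSingleton K _ (stmt11.target K i j x)


/-!
Each `e_{ij}` sends every basis vector `w₊^I w₋^β` to a scalar multiple of a basis vector, and
distinct basis vectors that it does not kill go to distinct basis vectors. Hence its kernel is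
spanned by the basis vectors it kills, namely those with `i ∈ I` or `p ∣ β_j` (the scalar is
`± β_j`). Intersecting over all `i, j` leaves the basis vectors with `I = {1,…,m}` or with
`p ∣ β_t` for every `t`.
-/

theorem Finsupp.ker_eq_supported_of_map_single {α β R : Type*} [Semiring R] [NoZeroDivisors R]
    (f : (α →₀ R) →ₗ[R] (β →₀ R)) (c : α → R) (g : α → β)
    (hf : ∀ x, f (single x 1) = c x • single (g x) 1) (hg : Set.InjOn g {x | c x ≠ 0}) :
    LinearMap.ker f = supported R R {x | c x = 0} := by
  refine le_antisymm (fun v hv => ?_) ?_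
  · have hf' : ∀ y a, f (single y a) = single (g y) (a * c y) := fun y a => by
      rw [← smul_single_one, map_smul, hf, smul_smul, smul_single_one]
    refine (mem_supported' R v).2 fun x (hx : c x ≠ 0) => ?_
    have hfvx : f v (g x) = v x * c x := by
      conv_lhs => rw [← v.sum_single, map_finsuppSum]
      simp only [hf', Finsupp.sum_apply]
      refine (Finset.sum_eq_single x (fun y _ hyx => ?_) (fun hvx => ?_)).trans (by simp)
      · by_cases hy : c y = 0
        · simp [hy]
        · exact single_eq_of_ne fun h => hyx (hg hy hx h.symm)
      · simp [notMem_support_iff.1 hvx]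
    rw [LinearMap.mem_ker.1 hv, zero_apply] at hfvx
    exact (mul_eq_zero.1 hfvx.symm).resolve_right hx
  · rw [supported_eq_span_single, Submodule.span_le]
    rintro _ ⟨x, hx : c x = 0, rfl⟩
    simp [hf, hx]

theorem sum_update_sub_one {ι : Type*} [Fintype ι] [DecidableEq ι] (β : ι → ℕ) (j : ι)
    (hj : β j ≠ 0) : ∑ t, Function.update β j (β j - 1) t = ∑ t, β t - 1 := by
  rw [Finset.sum_update_of_mem (Finset.mem_univ j), ← Finset.add_sum_erase _ _ (Finset.mem_univ j),
    Finset.sdiff_singleton_eq_erase]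
  omega

namespace stmt11

open Finsupp

variable {m n k : ℕ}

/-- The index of the basis vector `e_{ij}` sends `w₊^I w₋^β` to; junk value `x` when
`e_{ij}` kills `w₊^I w₋^β`. -/
def raise (i : Fin m) (j : Fin n) (x : Idx m n k) : Idx m n k :=
  if h : i ∉ x.1.1 ∧ x.1.2 j ≠ 0 then
    ⟨(insert i x.1.1, Function.update x.1.2 j (x.1.2 j - 1)), by
      have hβ : 1 ≤ ∑ t, x.1.2 t :=
        (Nat.one_le_iff_ne_zero.2 h.2).trans (Finset.single_le_sum (by simp) (Finset.mem_univ j))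
      have hx := x.2
      rw [Finset.card_insert_of_notMem h.1, sum_update_sub_one _ _ h.2]
      omega⟩
  else x

theorem val_raise {i : Fin m} {j : Fin n} {x : Idx m n k} (h : i ∉ x.1.1 ∧ x.1.2 j ≠ 0) :
    (raise i j x).1 = (insert i x.1.1, Function.update x.1.2 j (x.1.2 j - 1)) :=
  congrArg Subtype.val (dif_pos h)

theorem raise_injOn (i : Fin m) (j : Fin n) :
    Set.InjOn (raise (k := k) i j) {x | i ∉ x.1.1 ∧ x.1.2 j ≠ 0} := by
  rintro x (hx : i ∉ x.1.1 ∧ x.1.2 j ≠ 0) x' (hx' : i ∉ x'.1.1 ∧ x'.1.2 j ≠ 0) he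
  have he' := congrArg Subtype.val he
  rw [val_raise hx, val_raise hx', Prod.mk.injEq] at he'
  obtain ⟨hI, hβ⟩ := he'
  refine Subtype.ext (Prod.ext ?_ (funext fun t => ?_))
  · rw [← Finset.erase_insert hx.1, ← Finset.erase_insert hx'.1, hI]
  · have hβt := congrFun hβ t
    by_cases ht : t = j
    · subst ht
      simp only [Function.update_self] at hβt
      omega
    · simpa [ht] using hβt

variable (K : Type*) [Field K]

def coeff (i : Fin m) (j : Fin n) (x : Idx m n k) : K :=
  if i ∈ x.1.1 then 0 else (-1) ^ (x.1.1.filter (· < i)).card * (x.1.2 j : K)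

theorem coeff_eq_zero_iff (p : ℕ) [CharP K p] (i : Fin m) (j : Fin n) (x : Idx m n k) :
    coeff K i j x = 0 ↔ i ∈ x.1.1 ∨ p ∣ x.1.2 j := by
  by_cases hi : i ∈ x.1.1 <;> simp [coeff, hi, CharP.cast_eq_zero_iff K p]

theorem e_single (i : Fin m) (j : Fin n) (x : Idx m n k) :
    e K i j (single x 1) = coeff K i j x • (single (raise i j x) 1 : V K m n k) := by
  have h : e K i j (single x 1) = target K i j x :=
    (sum_single_index (by simp)).trans (one_smul _ _)
  rw [h, target]
  split_ifs with hx
  · rw [coeff, if_neg hx.1]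
    congr 2
    exact Subtype.ext (val_raise hx).symm
  · have hc : coeff K i j x = 0 := by
      by_cases hi : i ∈ x.1.1 <;> simp_all [coeff]
    rw [hc, zero_smul]
    rfl

theorem ker_e (p : ℕ) [CharP K p] (i : Fin m) (j : Fin n) :
    LinearMap.ker (e K (k := k) i j) = supported K K {x | i ∈ x.1.1 ∨ p ∣ x.1.2 j} := by
  have hinj : Set.InjOn (raise (k := k) i j) {x | coeff K i j x ≠ 0} :=
    (raise_injOn i j).mono fun x hx => by
      by_cases hi : i ∈ x.1.1
      · simp [coeff, hi] at hx
      · exact ⟨hi, fun hj => hx (by simp [coeff, hi, hj])⟩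
  refine (ker_eq_supported_of_map_single (e K i j) _ _ (e_single K i j) hinj).trans ?_
  congr 1
  ext x
  exact coeff_eq_zero_iff K p i j x

theorem iInter_mem_or_dvd (p : ℕ) :
    ⋂ (i : Fin m) (j : Fin n), {x : Idx m n k | i ∈ x.1.1 ∨ p ∣ x.1.2 j} =
      {x | (x.1.1.card < m ∧ ∀ t, p ∣ x.1.2 t) ∨ x.1.1.card = m} := by
  ext x
  have hcard : x.1.1.card = m ↔ ∀ i, i ∈ x.1.1 := by
    rw [← Finset.eq_univ_iff_forall, ← Finset.card_eq_iff_eq_univ, Fintype.card_fin]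
  have hle : x.1.1.card ≤ m := by simpa using x.1.1.card_le_univ
  simp only [Set.mem_iInter, Set.mem_ofPred_eq, forall_or_left, forall_or_right, ← hcard,
    hle.lt_iff_ne]
  tauto

theorem iInf_ker_e (p : ℕ) [CharP K p] :
    ⨅ (i : Fin m) (j : Fin n), LinearMap.ker (e K (k := k) i j) =
      supported K K {x | (x.1.1.card < m ∧ ∀ t, p ∣ x.1.2 t) ∨ x.1.1.card = m} := by
  rw [← iInter_mem_or_dvd, supported_iInter]
  refine iInf_congr fun i => ?_
  rw [supported_iInter]
  exact iInf_congr fun j => ker_e K p i j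

end stmt11

theorem stmt_11_general (K : Type*) [Field K] (p : ℕ) [CharP K p]
    (m n k : ℕ) :
    (⨅ (i : Fin m) (j : Fin n), LinearMap.ker (stmt11.e K (m := m) (n := n) (k := k) i j)) =
      Submodule.span K
        {v : stmt11.V K m n k | ∃ x : stmt11.Idx m n k,
          ((x.1.1.card < m ∧ ∀ t, p ∣ x.1.2 t) ∨ x.1.1.card = m) ∧
            v = Finsupp.single x 1} := by
  rw [stmt11.iInf_ker_e K p, Finsupp.supported_eq_span_single]
  congr 1
  ext v
  exact exists_congr fun x => and_congr Iff.rfl eq_comm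

/-- over a field of characteristic `p`, the common kernel of the
operators `e_{ij}` on `V_k` is spanned by the basis vectors `w₊^I w₋^β` with either
`|I| < m` and all `β_t` divisible by `p`, or `I = {1,…,m}` (which requires `k ≥ m`). -/
theorem stmt_11 (K : Type*) [Field K] (p : ℕ) (hp : p.Prime) [CharP K p]
    (m n k : ℕ) (hm : 1 ≤ m) (hn : 1 ≤ n) :
    (⨅ (i : Fin m) (j : Fin n), LinearMap.ker (stmt11.e K (m := m) (n := n) (k := k) i j)) =
      Submodule.span K
        {v : stmt11.V K m n k | ∃ x : stmt11.Idx m n k,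
          ((x.1.1.card < m ∧ ∀ t, p ∣ x.1.2 t) ∨ x.1.1.card = m) ∧
            v = Finsupp.single x 1} :=
  stmt_11_general K p m n k
end
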